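/- Suppose a two-agent allocation (A_1, A_2) of [0,1] into disjoint measurable sets must satisfy all three of: (i) |A_2 ∩ X_2| ≤ 1/4 + ε/4; (ii) v_1(A_1) ≥ 1/4 + ε/4 where v_1 has density 1 on X_{11}, ε on X_{12}, 2ε on X_{21}, ε on X_{22}; (iii) v_2(A_2) ≥ 3/8 where v_2 has density 1−ε on X_{11}, ε on X_{12}, 1 on X_2. Then for all sufficiently small ε > 0 no such allocation exists. -/

import Mathlib

/-! Agent 2 must hold at least `1/8 - ε/2` of `X₁₁`: `v₂` has density `ε` on `X₁₂` and at most `1`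
elsewhere, and outside `X₁₂` the set `A₂` lies, up to a null set, in `X₁₁ ∪ X₂`, of which (i)
allows it at most `1/4 + ε/4` in `X₂`. This leaves at most `1/8 + ε/2` of `X₁₁` to agent 1, whose
density is at most `2ε` off `X₁₁`, so `v₁(A₁) ≤ 1/8 + 5ε/2 < 1/4 + ε/4` once `ε < 1/18`. -/

open MeasureTheory Set
open scoped Classical

noncomputable def val (f : ℝ → ℝ) (X : Set ℝ) : ℝ := ∫ t in X, f t

section

variable {α : Type*} [MeasurableSpace α] {μ : Measure α}

theorem setIntegral_le_of_le_on_inter_of_le_on_sdiff {f : α → ℝ} {A S : Set α} {c d : ℝ}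
    (hA : MeasurableSet A) (hS : MeasurableSet S) (hAfin : μ A ≠ ⊤) (hf : IntegrableOn f A μ)
    (hc : ∀ x ∈ A ∩ S, f x ≤ c) (hd : ∀ x ∈ A \ S, f x ≤ d) :
    ∫ x in A, f x ∂μ ≤ c * μ.real (A ∩ S) + d * μ.real (A \ S) := by
  have hbound {B : Set α} (hB : B ⊆ A) (hBm : MeasurableSet B) {b : ℝ} (hb : ∀ x ∈ B, f x ≤ b) :
      ∫ x in B, f x ∂μ ≤ b * μ.real B := by
    calc ∫ x in B, f x ∂μ ≤ ∫ _ in B, b ∂μ :=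
          setIntegral_mono_on (hf.mono_set hB)
            (integrableOn_const (measure_mono hB |>.trans_lt hAfin.lt_top).ne) hBm hb
      _ = b * μ.real B := by rw [setIntegral_const, smul_eq_mul, mul_comm]
  rw [← integral_inter_add_sdiff hS hf]
  exact add_le_add (hbound inter_subset_left (hA.inter hS) hc)
    (hbound sdiff_subset (hA.diff hS) hd)

theorem integrableOn_of_abs_le {f : α → ℝ} {A : Set α} {M : ℝ} (hf : Measurable f)
    (hM : ∀ x, |f x| ≤ M) (hA : μ A ≠ ⊤) : IntegrableOn f A μ :=
  Measure.integrableOn_of_bounded hA hf.aestronglyMeasurable (ae_of_all _ hM)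

theorem measureReal_inter_add_measureReal_inter_le {A B S : Set α} (hAB : Disjoint A B)
    (hB : MeasurableSet B) (hS : MeasurableSet S) (hSfin : μ S ≠ ⊤) :
    μ.real (A ∩ S) + μ.real (B ∩ S) ≤ μ.real S := by
  rw [← measureReal_union (hAB.mono inter_subset_left inter_subset_left) (hB.inter hS)
    (measure_mono inter_subset_right |>.trans_lt hSfin.lt_top).ne
    (measure_mono inter_subset_right |>.trans_lt hSfin.lt_top).ne]
  exact measureReal_mono (union_subset inter_subset_right inter_subset_right) hSfin

theorem measureReal_sdiff_le_of_ae_le_union {A S R : Set α} (h : A ≤ᵐ[μ] (S ∪ R : Set α))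
    (hAfin : μ A ≠ ⊤) : μ.real (A \ R) ≤ μ.real (A ∩ S) := by
  refine ENNReal.toReal_mono (measure_mono inter_subset_left |>.trans_lt hAfin.lt_top).ne
    (measure_mono_ae ?_)
  filter_upwards [h] with x hx ⟨hA, hR⟩
  exact ⟨hA, (hx hA).resolve_right hR⟩

end

theorem Icc_ae_le_union_of_quarters {a b c d : Set ℝ} (ha : MeasurableSet a)
    (hb : MeasurableSet b) (hc : MeasurableSet c) (hd : MeasurableSet d)
    (hsub : a ∪ b ∪ c ∪ d ⊆ Icc 0 1) (hab : Disjoint a b) (hac : Disjoint a c)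
    (had : Disjoint a d) (hbc : Disjoint b c) (hbd : Disjoint b d) (hcd : Disjoint c d)
    (hva : volume a = 1/4) (hvb : volume b = 1/4) (hvc : volume c = 1/4) (hvd : volume d = 1/4) :
    Icc (0:ℝ) 1 ≤ᵐ[volume] (a ∪ b ∪ c ∪ d : Set ℝ) := by
  have hvol : volume (a ∪ b ∪ c ∪ d) = 1 := by
    rw [measure_union ((had.union_left hbd).union_left hcd) hd,
      measure_union (hac.union_left hbc) hc, measure_union hab hb, hva, hvb, hvc, hvd,
      ENNReal.div_add_div_same, ENNReal.div_add_div_same, ENNReal.div_add_div_same]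
    norm_num [ENNReal.div_self]
  refine (ae_eq_of_subset_of_measure_ge hsub (by simp [hvol]) ?_ (by simp)).symm.le
  exact (((ha.union hb).union hc).union hd).nullMeasurableSet

section

variable {X₁₁ X₁₂ X₂₁ A : Set ℝ} {ε : ℝ}

noncomputable def density₁ (X₁₁ X₁₂ X₂₁ : Set ℝ) (ε t : ℝ) : ℝ :=
  if t ∈ X₁₁ then 1 else if t ∈ X₁₂ then ε else if t ∈ X₂₁ then 2 * ε else ε

noncomputable def density₂ (X₁₁ X₁₂ : Set ℝ) (ε t : ℝ) : ℝ :=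
  if t ∈ X₁₁ then 1 - ε else if t ∈ X₁₂ then ε else 1

theorem val_density₁_le (hε : 0 ≤ ε) (hε' : ε ≤ 1/2) (hA : MeasurableSet A)
    (hm₁₁ : MeasurableSet X₁₁) (hm₁₂ : MeasurableSet X₁₂) (hm₂₁ : MeasurableSet X₂₁)
    (hAs : A ⊆ Icc 0 1) :
    val (density₁ X₁₁ X₁₂ X₂₁ ε) A ≤ volume.real (A ∩ X₁₁) + 2 * ε := by
  have hAfin : volume A ≠ ⊤ := (measure_mono hAs |>.trans_lt measure_Icc_lt_top).ne
  have hint : IntegrableOn (density₁ X₁₁ X₁₂ X₂₁ ε) A :=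
    integrableOn_of_abs_le (M := 1) (Measurable.ite hm₁₁ measurable_const (Measurable.ite hm₁₂
      measurable_const (Measurable.ite hm₂₁ measurable_const measurable_const)))
      (fun t => abs_le.2 (by unfold density₁; split_ifs <;> constructor <;> linarith)) hAfin
  have hrest : volume.real (A \ X₁₁) ≤ 1 := by
    simpa using measureReal_mono (μ := volume) (sdiff_subset.trans hAs) (by simp)
  have hsplit := setIntegral_le_of_le_on_inter_of_le_on_sdiff (c := 1) (d := 2 * ε)
    hA hm₁₁ hAfin hint
    (fun t ht => by simp [density₁, ht.2])
    (fun t ht => by simp only [density₁, if_neg ht.2]; split_ifs <;> linarith)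
  unfold val
  nlinarith

theorem val_density₂_le (hε : 0 ≤ ε) (hε' : ε ≤ 1) (hA : MeasurableSet A)
    (hm₁₁ : MeasurableSet X₁₁) (hm₁₂ : MeasurableSet X₁₂) (hd : Disjoint X₁₁ X₁₂)
    (hv : volume X₁₂ = 1/4) (hAfin : volume A ≠ ⊤) :
    val (density₂ X₁₁ X₁₂ ε) A ≤ ε / 4 + volume.real (A \ X₁₂) := by
  have hint : IntegrableOn (density₂ X₁₁ X₁₂ ε) A :=
    integrableOn_of_abs_le (M := 1)
      (Measurable.ite hm₁₁ measurable_const (Measurable.ite hm₁₂ measurable_const measurable_const))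
      (fun t => abs_le.2 (by unfold density₂; split_ifs <;> constructor <;> linarith)) hAfin
  have hsplit := setIntegral_le_of_le_on_inter_of_le_on_sdiff (c := ε) (d := 1) hA hm₁₂ hAfin hint
    (fun t ht => by simp [density₂, ht.2, hd.notMem_of_mem_right ht.2])
    (fun t _ => by unfold density₂; split_ifs <;> linarith)
  have hX₁₂ : volume.real (A ∩ X₁₂) ≤ 1/4 :=
    (measureReal_mono inter_subset_right (by simp [hv])).trans_eq (by simp [Measure.real, hv])
  unfold val
  nlinarith

end

theorem no_allocation_for_instance_six
    (X₁₁ X₁₂ X₂₁ X₂₂ : Set ℝ)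
    (hm₁₁ : MeasurableSet X₁₁) (hm₁₂ : MeasurableSet X₁₂)
    (hm₂₁ : MeasurableSet X₂₁) (hm₂₂ : MeasurableSet X₂₂)
    (hsub : X₁₁ ⊆ Set.Icc 0 1 ∧ X₁₂ ⊆ Set.Icc 0 1 ∧ X₂₁ ⊆ Set.Icc 0 1 ∧ X₂₂ ⊆ Set.Icc 0 1)
    (hd₁ : Disjoint X₁₁ X₁₂) (hd₂ : Disjoint X₁₁ X₂₁) (hd₃ : Disjoint X₁₁ X₂₂)
    (hd₄ : Disjoint X₁₂ X₂₁) (hd₅ : Disjoint X₁₂ X₂₂) (hd₆ : Disjoint X₂₁ X₂₂)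
    (hv₁₁ : volume X₁₁ = 1/4) (hv₁₂ : volume X₁₂ = 1/4)
    (hv₂₁ : volume X₂₁ = 1/4) (hv₂₂ : volume X₂₂ = 1/4) :
    ∃ ε₀ > (0:ℝ), ∀ ε : ℝ, 0 < ε → ε < ε₀ →
      ¬ ∃ A₁ A₂ : Set ℝ,
        MeasurableSet A₁ ∧ MeasurableSet A₂ ∧ Disjoint A₁ A₂ ∧
        A₁ ⊆ Set.Icc 0 1 ∧ A₂ ⊆ Set.Icc 0 1 ∧
        -- (i)
        volume (A₂ ∩ (X₂₁ ∪ X₂₂)) ≤ ENNReal.ofReal (1/4 + ε/4) ∧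
        -- (ii)
        val (fun t => if t ∈ X₁₁ then 1 else if t ∈ X₁₂ then ε else if t ∈ X₂₁ then 2*ε else ε) A₁
          ≥ 1/4 + ε/4 ∧
        -- (iii)
        val (fun t => if t ∈ X₁₁ then 1 - ε else if t ∈ X₁₂ then ε else 1) A₂ ≥ 3/8 := by
  obtain ⟨hs₁₁, hs₁₂, hs₂₁, hs₂₂⟩ := hsub
  have hcover := Icc_ae_le_union_of_quarters hm₁₁ hm₂₁ hm₂₂ hm₁₂
    (union_subset (union_subset (union_subset hs₁₁ hs₂₁) hs₂₂) hs₁₂)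
    hd₂ hd₃ hd₁ hd₆ hd₄.symm hd₅.symm hv₁₁ hv₂₁ hv₂₂ hv₁₂
  rw [union_assoc X₁₁] at hcover
  refine ⟨1/18, by norm_num, ?_⟩
  rintro ε hε hε₀ ⟨A₁, A₂, hA₁, hA₂, hA, hA₁s, hA₂s, hi, hii, hiii⟩
  have hA₂fin : volume A₂ ≠ ⊤ := (measure_mono hA₂s |>.trans_lt measure_Icc_lt_top).ne
  have hv₁ := hii.trans (val_density₁_le hε.le (by linarith) hA₁ hm₁₁ hm₁₂ hm₂₁ hA₁s)
  have hv₂ := hiii.trans (val_density₂_le hε.le (by linarith) hA₂ hm₁₁ hm₁₂ hd₁ hv₁₂ hA₂fin)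
  have hA₂_rest :
      volume.real (A₂ \ X₁₂) ≤ volume.real (A₂ ∩ X₁₁) + volume.real (A₂ ∩ (X₂₁ ∪ X₂₂)) :=
    (measureReal_sdiff_le_of_ae_le_union ((LE.le.eventuallyLE hA₂s).trans hcover) hA₂fin).trans
      (by rw [inter_union_distrib_left A₂ X₁₁]; exact measureReal_union_le _ _)
  have hshare : volume.real (A₁ ∩ X₁₁) + volume.real (A₂ ∩ X₁₁) ≤ 1/4 := by
    simpa [Measure.real, hv₁₁] using
      measureReal_inter_add_measureReal_inter_le (μ := volume) hA hA₂ hm₁₁ (by simp [hv₁₁])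
  have hi' : volume.real (A₂ ∩ (X₂₁ ∪ X₂₂)) ≤ 1/4 + ε/4 :=
    ENNReal.toReal_le_of_le_ofReal (by positivity) hi
  linarith
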